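/- arXiv:1601.01210 — 8 statements merged into one kernel-verified Lean document; each statement's English description precedes it below -/
import Mathlib

section
/- Let F: K^n → K^n be a polynomial map of the form F = Id + H where each component of H has lower degree ≥ 2, let T ∈ GL(n,K), and let F̃ = T^{-1} ∘ F ∘ T. Then for the associated sequences of polynomial maps P_k (for F) and P̃_k (for F̃), one has P̃_k = T^{-1} ∘ P_k ∘ T for all k ≥ 1. In particular, if F is nice then F̃ is nice. -/
open MvPolynomial Finset

noncomputable def seqP {K : Type*} [Field K] {n : ℕ}
    (F : Fin n → MvPolynomial (Fin n) K) : ℕ → Fin n → MvPolynomial (Fin n) K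
  | 0 => fun i => X i
  | k + 1 => fun i => bind₁ F (seqP F k i) - seqP F k i

/-- Composition of polynomial maps: `(polyComp F G)(x) = F(G(x))`. -/
noncomputable def polyComp {K : Type*} [Field K] {n : ℕ}
    (F G : Fin n → MvPolynomial (Fin n) K) : Fin n → MvPolynomial (Fin n) K :=
  fun i => bind₁ G (F i)

/-- The polynomial map associated to a matrix `T`. -/
noncomputable def linMap {K : Type*} [Field K] {n : ℕ}
    (T : Matrix (Fin n) (Fin n) K) : Fin n → MvPolynomial (Fin n) K :=
  fun i => ∑ j, T i j • X j

section Conjugation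

variable {K : Type*} [Field K] {n : ℕ}

lemma polyComp_assoc (F G H : Fin n → MvPolynomial (Fin n) K) :
    polyComp (polyComp F G) H = polyComp F (polyComp G H) := by
  funext i
  exact bind₁_bind₁ G H (F i)

lemma polyComp_X_left (G : Fin n → MvPolynomial (Fin n) K) :
    polyComp (fun i => X i) G = G := by
  funext i
  exact bind₁_X_right G i

lemma polyComp_zero_left (G : Fin n → MvPolynomial (Fin n) K) : polyComp 0 G = 0 :=
  funext fun _ => map_zero _

lemma polyComp_sub_left (F F' G : Fin n → MvPolynomial (Fin n) K) :
    polyComp (F - F') G = polyComp F G - polyComp F' G :=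
  funext fun _ => map_sub _ _ _

lemma polyComp_linMap_left (A : Matrix (Fin n) (Fin n) K) (G : Fin n → MvPolynomial (Fin n) K) :
    polyComp (linMap A) G = fun i => ∑ j, A i j • G j :=
  funext fun i => by simp [polyComp, linMap, map_sum]

lemma polyComp_linMap_zero (A : Matrix (Fin n) (Fin n) K) :
    polyComp (linMap A) (0 : Fin n → MvPolynomial (Fin n) K) = 0 := by
  rw [polyComp_linMap_left]
  funext i
  simp

lemma polyComp_linMap_sub (A : Matrix (Fin n) (Fin n) K) (G G' : Fin n → MvPolynomial (Fin n) K) :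
    polyComp (linMap A) (G - G') = polyComp (linMap A) G - polyComp (linMap A) G' := by
  simp only [polyComp_linMap_left]
  funext i
  simp only [Pi.sub_apply, smul_sub, sum_sub_distrib]

lemma polyComp_linMap_linMap (A B : Matrix (Fin n) (Fin n) K) :
    polyComp (linMap A) (linMap B) = linMap (A * B) := by
  rw [polyComp_linMap_left]
  funext i
  simp only [linMap, smul_sum, smul_smul, Matrix.mul_apply, sum_smul]
  exact sum_comm

lemma linMap_one : linMap (1 : Matrix (Fin n) (Fin n) K) = fun i => X i := by
  funext i
  simp [linMap, Matrix.one_apply]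

lemma polyComp_linMap_cancel {A B : Matrix (Fin n) (Fin n) K} (hAB : A * B = 1)
    (G : Fin n → MvPolynomial (Fin n) K) :
    polyComp (linMap A) (polyComp (linMap B) G) = G := by
  rw [← polyComp_assoc, polyComp_linMap_linMap, hAB, linMap_one, polyComp_X_left]

lemma seqP_zero (F : Fin n → MvPolynomial (Fin n) K) : seqP F 0 = fun i => X i := rfl

lemma seqP_succ (F : Fin n → MvPolynomial (Fin n) K) (k : ℕ) :
    seqP F (k + 1) = polyComp (seqP F k) F - seqP F k := rfl

/-- `(M ∘ P ∘ N) ∘ (M ∘ F ∘ N) = M ∘ (P ∘ F) ∘ N` since `N ∘ M = Id`, and the linear map `M`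
passes through the difference in `P ↦ P ∘ F - P`. -/
theorem seqP_polyComp_linMap {M N : Matrix (Fin n) (Fin n) K} (hMN : M * N = 1)
    (F : Fin n → MvPolynomial (Fin n) K) (k : ℕ) :
    seqP (polyComp (linMap M) (polyComp F (linMap N))) k
      = polyComp (linMap M) (polyComp (seqP F k) (linMap N)) := by
  have hNM : N * M = 1 := mul_eq_one_comm.mp hMN
  induction k with
  | zero => rw [seqP_zero, seqP_zero, polyComp_X_left, polyComp_linMap_linMap, hMN, linMap_one]
  | succ k ih =>
    rw [seqP_succ, seqP_succ, ih, polyComp_sub_left, polyComp_linMap_sub]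
    simp only [polyComp_assoc, polyComp_linMap_cancel hNM]

end Conjugation

theorem stmt1_general {K : Type*} [Field K] {n : ℕ}
    (F : Fin n → MvPolynomial (Fin n) K)
    (T : GL (Fin n) K)
    (Ftil : Fin n → MvPolynomial (Fin n) K)
    (hFtil : Ftil = polyComp (linMap (↑T⁻¹ : Matrix (Fin n) (Fin n) K))
      (polyComp F (linMap (↑T : Matrix (Fin n) (Fin n) K)))) :
    (∀ k, 1 ≤ k →
      seqP Ftil k = polyComp (linMap (↑T⁻¹ : Matrix (Fin n) (Fin n) K))
        (polyComp (seqP F k) (linMap (↑T : Matrix (Fin n) (Fin n) K)))) ∧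
    ((∃ m, ∀ i, seqP F m i = 0) → ∃ m, ∀ i, seqP Ftil m i = 0) := by
  have conj := seqP_polyComp_linMap T.inv_mul F
  subst hFtil
  refine ⟨fun k _ => conj k, ?_⟩
  rintro ⟨m, hm⟩
  have hFm : seqP F m = 0 := funext hm
  refine ⟨m, fun i => ?_⟩
  rw [conj, hFm, polyComp_zero_left, polyComp_linMap_zero, Pi.zero_apply]

/-- If `F = Id + H` with `H` of lower degree `≥ 2`, `T ∈ GL(n,K)` and
`F̃ = T⁻¹ ∘ F ∘ T`, then `P̃_k = T⁻¹ ∘ P_k ∘ T` for all `k ≥ 1`;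
in particular if `F` is nice, then `F̃` is nice. -/
theorem stmt1 {K : Type*} [Field K] [CharZero K] {n : ℕ}
    (F H : Fin n → MvPolynomial (Fin n) K)
    (hFH : ∀ i, F i = X i + H i)
    (hH : ∀ i, ∀ d ∈ (H i).support, 2 ≤ d.sum fun _ e => e)
    (T : GL (Fin n) K)
    (Ftil : Fin n → MvPolynomial (Fin n) K)
    (hFtil : Ftil = polyComp (linMap (↑T⁻¹ : Matrix (Fin n) (Fin n) K))
      (polyComp F (linMap (↑T : Matrix (Fin n) (Fin n) K)))) :
    (∀ k, 1 ≤ k →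
      seqP Ftil k = polyComp (linMap (↑T⁻¹ : Matrix (Fin n) (Fin n) K))
        (polyComp (seqP F k) (linMap (↑T : Matrix (Fin n) (Fin n) K)))) ∧
    ((∃ m, ∀ i, seqP F m i = 0) → ∃ m, ∀ i, seqP Ftil m i = 0) :=
  stmt1_general F T Ftil hFtil
end

section
/- Every triangular polynomial map F: K^n → K^n, i.e. one of the form F_i(X) = X_i + H_i(X_{i+1},...,X_n) for i < n and F_n(X) = X_n, is nice: there exists m with P_m = 0 where P_0 = Id, P_1 = F - Id, P_k = P_{k-1} ∘ F - P_{k-1}. -/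
/-!
Give `X j` the weight `w j = d ^ (n - 1 - j)`, where `d` exceeds the total degree of every
`H j = F j - X j`. Since `H j` only involves the variables `X i` with `i > j`, each of its
monomials has weight `< w j`. The operator `Δ p = p ∘ F - p` satisfies the twisted Leibniz rule
`Δ (p * q) = Δ p * (q ∘ F) + p * Δ q` and `Δ (X j) = H j`, so it strictly lowers weighted
degree. Hence `Δ^[N + 1]` kills every polynomial of weighted degree `≤ N`, in particular
`seqP F (N + 1) i = Δ^[N + 1] (X i)` for `N ≥ w i`.
-/

open MvPolynomial Finset

namespace MvPolynomial

variable {R σ : Type*} [CommRing R]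

section WeightFiltration

variable (R) (w : σ → ℕ)

noncomputable abbrev weightLE (d : ℕ) : Submodule R (MvPolynomial σ R) :=
  restrictSupport R {s | Finsupp.weight w s ≤ d}

noncomputable abbrev weightLT (d : ℕ) : Submodule R (MvPolynomial σ R) :=
  restrictSupport R {s | Finsupp.weight w s < d}

variable {R w} {a b d e : ℕ} {p q : MvPolynomial σ R}

lemma weightLE_mono (h : d ≤ e) : weightLE R w d ≤ weightLE R w e :=
  restrictSupport_mono R <| Set.ofPred_subset_ofPred.mpr fun _ hs => hs.trans h

lemma weightLT_mono (h : d ≤ e) : weightLT R w d ≤ weightLT R w e :=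
  restrictSupport_mono R <| Set.ofPred_subset_ofPred.mpr fun _ hs => hs.trans_le h

lemma weightLT_le_weightLE : weightLT R w d ≤ weightLE R w d :=
  restrictSupport_mono R <| Set.ofPred_subset_ofPred.mpr fun _ hs => hs.le

lemma weightLT_succ : weightLT R w (d + 1) = weightLE R w d := by
  simp only [weightLT, weightLE, Nat.lt_succ_iff]

lemma eq_zero_of_mem_weightLT_zero (hp : p ∈ weightLT R w 0) : p = 0 := by
  simpa [mem_restrictSupport_iff] using hp

lemma monomial_one_mem_weightLE (s : σ →₀ ℕ) :
    monomial s (1 : R) ∈ weightLE R w (Finsupp.weight w s) := by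
  simp

lemma X_mem_weightLE (i : σ) : (X i : MvPolynomial σ R) ∈ weightLE R w (w i) := by
  have := monomial_one_mem_weightLE (R := R) (w := w) (Finsupp.single i 1)
  rwa [Finsupp.weight_single, one_smul] at this

open scoped Pointwise in
lemma mul_mem_restrictSupport {s t : Set (σ →₀ ℕ)} (hp : p ∈ restrictSupport R s)
    (hq : q ∈ restrictSupport R t) : p * q ∈ restrictSupport R (s + t) := by
  rw [restrictSupport_add]
  exact Submodule.mul_mem_mul hp hq

lemma mul_mem_weightLT_of_le_of_lt (hp : p ∈ weightLE R w a) (hq : q ∈ weightLT R w b) :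
    p * q ∈ weightLT R w (a + b) := by
  refine restrictSupport_mono R ?_ (mul_mem_restrictSupport hp hq)
  rintro _ ⟨s, hs, t, ht, rfl⟩
  simp only [Set.mem_ofPred_eq, map_add] at hs ht ⊢
  omega

lemma mul_mem_weightLT_of_lt_of_le (hp : p ∈ weightLT R w a) (hq : q ∈ weightLE R w b) :
    p * q ∈ weightLT R w (a + b) := by
  rw [mul_comm, add_comm]
  exact mul_mem_weightLT_of_le_of_lt hq hp

lemma mem_weightLT_of_totalDegree_lt {c : ℕ} (hp : p.totalDegree < d)
    (hw : ∀ i ∈ p.vars, d * w i ≤ c) (hc : 0 < c) : p ∈ weightLT R w c := by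
  intro s hs
  have hvars : ∀ i ∈ s.support, d * w i ≤ c := fun i hi =>
    hw i ((mem_vars_iff_mem_support i).mpr ⟨s, hs, hi⟩)
  have hdeg : (s.sum fun _ e => e) * c < d * c :=
    Nat.mul_lt_mul_of_pos_right (lt_of_le_of_lt (le_totalDegree hs) hp) hc
  have hweight : d * Finsupp.weight w s ≤ (s.sum fun _ e => e) * c := by
    simp only [Finsupp.weight_apply, Finsupp.sum, Finset.mul_sum, Finset.sum_mul, smul_eq_mul]
    refine Finset.sum_le_sum fun i hi => ?_
    calc d * (s i * w i) = s i * (d * w i) := by ring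
      _ ≤ s i * c := Nat.mul_le_mul_left _ (hvars i hi)
  exact Nat.lt_of_mul_lt_mul_left (hweight.trans_lt hdeg)

end WeightFiltration

section BindDiff

variable (F : σ → MvPolynomial σ R)

noncomputable def bindDiff : MvPolynomial σ R →ₗ[R] MvPolynomial σ R :=
  (bind₁ F).toLinearMap - LinearMap.id

variable {F}

lemma bindDiff_apply (p : MvPolynomial σ R) : bindDiff F p = bind₁ F p - p := rfl

lemma bindDiff_mul (p q : MvPolynomial σ R) :
    bindDiff F (p * q) = bindDiff F p * bind₁ F q + p * bindDiff F q := by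
  simp only [bindDiff_apply, map_mul]
  ring

variable {w : σ → ℕ} {a b d : ℕ} {p q : MvPolynomial σ R}

lemma bindDiff_mul_mem_weightLT (hp : p ∈ weightLE R w a) (hq : q ∈ weightLE R w b)
    (hΔp : bindDiff F p ∈ weightLT R w a) (hΔq : bindDiff F q ∈ weightLT R w b) :
    bindDiff F (p * q) ∈ weightLT R w (a + b) := by
  have hFq : bind₁ F q ∈ weightLE R w b := by
    rw [← sub_add_cancel (bind₁ F q) q]
    exact add_mem (weightLT_le_weightLE hΔq) hq
  rw [bindDiff_mul]
  exact add_mem (mul_mem_weightLT_of_lt_of_le hΔp hFq) (mul_mem_weightLT_of_le_of_lt hp hΔq)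

lemma bindDiff_monomial_one_mem_weightLT (hF : ∀ i, bindDiff F (X i) ∈ weightLT R w (w i))
    (s : σ →₀ ℕ) :
    bindDiff F (monomial s (1 : R)) ∈ weightLT R w (Finsupp.weight w s) := by
  have hadd : ∀ s t : σ →₀ ℕ,
      bindDiff F (monomial s (1 : R)) ∈ weightLT R w (Finsupp.weight w s) →
      bindDiff F (monomial t (1 : R)) ∈ weightLT R w (Finsupp.weight w t) →
      bindDiff F (monomial (s + t) (1 : R)) ∈ weightLT R w (Finsupp.weight w (s + t)) := by
    intro s t hs ht
    rw [← one_mul (1 : R), ← monomial_mul, map_add]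
    exact bindDiff_mul_mem_weightLT (monomial_one_mem_weightLE s) (monomial_one_mem_weightLE t)
      hs ht
  induction s using Finsupp.induction_linear with
  | zero => simp [bindDiff_apply]
  | add s t hs ht => exact hadd s t hs ht
  | single i m =>
    induction m with
    | zero => simp [bindDiff_apply]
    | succ m ih =>
      rw [Finsupp.single_add]
      refine hadd _ _ ih ?_
      simpa [X, Finsupp.weight_single] using hF i

lemma weightLE_le_comap_bindDiff (hF : ∀ i, bindDiff F (X i) ∈ weightLT R w (w i)) (d : ℕ) :
    weightLE R w d ≤ (weightLT R w d).comap (bindDiff F) := by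
  rw [weightLE, restrictSupport_eq_span, Submodule.span_le, Set.image_subset_iff]
  intro s hs
  exact weightLT_mono hs (bindDiff_monomial_one_mem_weightLT hF s)

lemma bindDiff_iterate_eq_zero (hF : ∀ i, bindDiff F (X i) ∈ weightLT R w (w i))
    (hp : p ∈ weightLE R w d) : (bindDiff F)^[d + 1] p = 0 := by
  induction d generalizing p with
  | zero =>
    exact eq_zero_of_mem_weightLT_zero (weightLE_le_comap_bindDiff hF 0 hp)
  | succ d ih =>
    rw [Function.iterate_succ_apply]
    exact ih (weightLT_succ.le (weightLE_le_comap_bindDiff hF (d + 1) hp))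

end BindDiff

lemma exists_weight_of_triangular {n : ℕ} (F : Fin n → MvPolynomial (Fin n) R)
    (htri : ∀ i, F i - X i ∈ supported R {j : Fin n | i < j}) :
    ∃ w : Fin n → ℕ, ∀ i, F i - X i ∈ weightLT R w (w i) := by
  set d := (univ.sup fun i => (F i - X i).totalDegree) + 1
  have hd : 0 < d := Nat.succ_pos _
  refine ⟨fun j => d ^ (n - 1 - j), fun i => mem_weightLT_of_totalDegree_lt
    (Nat.lt_succ_of_le (le_sup (f := fun i => (F i - X i).totalDegree) (mem_univ i)))
    (fun j hj => ?_) (by positivity)⟩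
  have hij : i < j := mem_supported.mp (htri i) hj
  rw [← pow_succ']
  exact Nat.pow_le_pow_right hd (by omega)

end MvPolynomial

lemma seqP_eq_bindDiff_iterate {K : Type*} [Field K] {n : ℕ}
    (F : Fin n → MvPolynomial (Fin n) K) (k : ℕ) (i : Fin n) :
    seqP F k i = (bindDiff F)^[k] (X i) := by
  induction k with
  | zero => rfl
  | succ k ih => rw [Function.iterate_succ_apply', ← ih, bindDiff_apply, seqP]

theorem stmt2_general {K : Type*} [Field K] {n : ℕ}
    (F : Fin n → MvPolynomial (Fin n) K)
    (htri : ∀ i, F i - X i ∈ MvPolynomial.supported K {j : Fin n | i < j}) :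
    ∃ m, ∀ i, seqP F m i = 0 := by
  obtain ⟨w, hw⟩ := exists_weight_of_triangular F htri
  have hF : ∀ i, bindDiff F (X i) ∈ weightLT K w (w i) := by
    simpa only [bindDiff_apply, bind₁_X_right] using hw
  refine ⟨univ.sup w + 1, fun i => ?_⟩
  rw [seqP_eq_bindDiff_iterate]
  exact bindDiff_iterate_eq_zero hF (weightLE_mono (le_sup (mem_univ i)) (X_mem_weightLE i))

/-- Every triangular polynomial map, i.e. `F_i = X_i + H_i(X_{i+1},…,X_n)`
with `F_n = X_n`, is nice. -/
theorem stmt2 {K : Type*} [Field K] [CharZero K] {n : ℕ}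
    (F : Fin n → MvPolynomial (Fin n) K)
    (htri : ∀ i, F i - X i ∈ MvPolynomial.supported K {j : Fin n | i < j})
    (hlast : ∀ i : Fin n, (i : ℕ) = n - 1 → F i = X i) :
    ∃ m, ∀ i, seqP F m i = 0 :=
  stmt2_general F htri
end

section
/- If F is a nice polynomial automorphism of K^n, then its inverse G = F^{-1} is nice. Specifically, if P_m^i = 0 for the sequence associated to F, then the sequence Q_k^i associated to G satisfies Q_k^i(Y) = Σ_{l=k}^{m-1} (-1)^l P_l^i(G^{k-1}(Y)) and hence Q_m^i = 0. -/
/-!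
Let `φ`, `ψ` be the substitution endomorphisms `p ↦ p ∘ F`, `p ↦ p ∘ G` of `K[X]`, so that
`P_k^i = (φ - 1)^k X_i`, `Q_k^i = (ψ - 1)^k X_i` and `ψ φ = 1`. Then `ψ (φ - 1) = 1 - ψ`, hence
`(1 - ψ)^k = ψ^k (φ - 1)^k`. Expanding `ψ = 1 - ψ (φ - 1)` repeatedly inside `ψ^(k+1) (φ - 1)^(k+1)`
writes it as the alternating sum of the `ψ^k (φ - 1)^l`, `l > k`, plus a remainder
`± ψ^(k+1) (φ - 1)^N` that kills `X_i` as soon as `N ≥ m`.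
-/

open MvPolynomial Finset

/-- `compN G k` is the `k`-fold composition `G^k` of `G` with itself
(`compN G 0 = Id`). -/
noncomputable def compN {K : Type*} [Field K] {n : ℕ}
    (G : Fin n → MvPolynomial (Fin n) K) : ℕ → Fin n → MvPolynomial (Fin n) K
  | 0 => fun i => X i
  | k + 1 => fun i => bind₁ (compN G k) (G i)

section LeftInverse

variable {A : Type*} [Ring A] {φ ψ : A}

theorem mul_sub_one_of_mul_eq_one (h : ψ * φ = 1) : ψ * (φ - 1) = 1 - ψ := by
  rw [mul_sub, h, mul_one]

theorem one_sub_pow_of_mul_eq_one (h : ψ * φ = 1) (k : ℕ) :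
    (1 - ψ) ^ k = ψ ^ k * (φ - 1) ^ k := by
  induction k with
  | zero => simp
  | succ k ih =>
    have hcomm : Commute (1 - ψ) (ψ ^ k) := ((Commute.one_left ψ).sub_left (.refl ψ)).pow_right k
    calc (1 - ψ) ^ (k + 1) = ψ ^ k * (1 - ψ) * (φ - 1) ^ k := by
          rw [pow_succ', ih, ← mul_assoc, hcomm.eq]
      _ = ψ ^ (k + 1) * (φ - 1) ^ (k + 1) := by
          rw [← mul_sub_one_of_mul_eq_one h, pow_succ, pow_succ', mul_assoc, mul_assoc, mul_assoc]

theorem sub_one_pow_of_mul_eq_one (h : ψ * φ = 1) (k : ℕ) :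
    (ψ - 1) ^ k = (-1) ^ k * ψ ^ k * (φ - 1) ^ k := by
  rw [← neg_sub, neg_pow, one_sub_pow_of_mul_eq_one h, mul_assoc]

theorem mul_sub_one_pow_of_mul_eq_one (h : ψ * φ = 1) (l : ℕ) :
    ψ * (φ - 1) ^ l = (φ - 1) ^ l - ψ * (φ - 1) ^ (l + 1) := by
  rw [pow_succ', ← mul_assoc, mul_sub_one_of_mul_eq_one h, sub_mul, one_mul, sub_sub_cancel]

theorem neg_one_pow_mul_pow_succ_mul_of_mul_eq_one (h : ψ * φ = 1) (k l : ℕ) :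
    (-1) ^ l * ψ ^ (k + 1) * (φ - 1) ^ l
      = (-1) ^ l * ψ ^ k * (φ - 1) ^ l + (-1) ^ (l + 1) * ψ ^ (k + 1) * (φ - 1) ^ (l + 1) := by
  calc (-1) ^ l * ψ ^ (k + 1) * (φ - 1) ^ l = (-1) ^ l * ψ ^ k * (ψ * (φ - 1) ^ l) := by
        simp only [pow_succ, mul_assoc]
    _ = _ := by
        rw [mul_sub_one_pow_of_mul_eq_one h, pow_succ (-1 : A), pow_succ ψ]
        noncomm_ring

theorem sub_one_pow_succ_eq_sum_add_of_mul_eq_one (h : ψ * φ = 1) (k N : ℕ) :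
    (ψ - 1) ^ (k + 1) = ∑ l ∈ Ico (k + 1) (k + 1 + N), (-1) ^ l * ψ ^ k * (φ - 1) ^ l
      + (-1) ^ (k + 1 + N) * ψ ^ (k + 1) * (φ - 1) ^ (k + 1 + N) := by
  induction N with
  | zero => simp [sub_one_pow_of_mul_eq_one h]
  | succ N ih =>
    rw [ih, neg_one_pow_mul_pow_succ_mul_of_mul_eq_one h, ← add_assoc,
      ← sum_Ico_succ_top (by omega), add_assoc]

variable {M : Type*} [AddCommGroup M] [Module A M]

theorem sub_one_pow_succ_smul_of_mul_eq_one (h : ψ * φ = 1) {m : ℕ} {x : M}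
    (hx : (φ - 1) ^ m • x = 0) (k : ℕ) :
    (ψ - 1) ^ (k + 1) • x = ∑ l ∈ Ico (k + 1) m, ((-1) ^ l * ψ ^ k * (φ - 1) ^ l) • x := by
  have hvanish : ∀ a : A, ∀ l, m ≤ l → (a * (φ - 1) ^ l) • x = 0 := by
    intro a l hl
    rw [← Nat.sub_add_cancel hl, pow_add, ← mul_assoc, mul_smul, hx, smul_zero]
  obtain ⟨N, hN⟩ : ∃ N, max m (k + 1) = k + 1 + N := Nat.exists_eq_add_of_le (le_max_right _ _)
  rw [sub_one_pow_succ_eq_sum_add_of_mul_eq_one h k N, add_smul, ← hN, sum_smul,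
    hvanish _ _ (by omega), add_zero]
  rcases le_total m (k + 1) with hm | hm
  · rw [max_eq_right hm, Ico_self, Ico_eq_empty_of_le hm]
  · rw [max_eq_left hm]

theorem sub_one_pow_smul_eq_zero_of_mul_eq_one (h : ψ * φ = 1) {m : ℕ} {x : M}
    (hx : (φ - 1) ^ m • x = 0) : (ψ - 1) ^ m • x = 0 := by
  cases m with
  | zero => simpa using hx
  | succ m => rw [sub_one_pow_succ_smul_of_mul_eq_one h hx, Ico_self, sum_empty]

end LeftInverse

theorem Module.End.neg_one_pow_apply {R M : Type*} [CommRing R] [AddCommGroup M] [Module R M]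
    (l : ℕ) (v : M) : ((-1 : Module.End R M) ^ l) v = (-1 : R) ^ l • v := by
  rw [← neg_one_smul R (1 : Module.End R M), smul_pow, one_pow, LinearMap.smul_apply,
    Module.End.one_apply]

section Polynomial

variable {K : Type*} [Field K] {n : ℕ}

theorem seqP_eq_pow_apply (F : Fin n → MvPolynomial (Fin n) K) (k : ℕ) (i : Fin n) :
    seqP F k i = (((bind₁ F).toLinearMap - 1) ^ k) (X i) := by
  induction k with
  | zero => rfl
  | succ k ih => rw [pow_succ', Module.End.mul_apply, ← ih]; rfl

theorem bind₁_compN_eq_pow_apply (G : Fin n → MvPolynomial (Fin n) K) (k : ℕ)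
    (p : MvPolynomial (Fin n) K) : bind₁ (compN G k) p = ((bind₁ G).toLinearMap ^ k) p := by
  induction k generalizing p with
  | zero => exact AlgHom.congr_fun bind₁_X_left p
  | succ k ih =>
    rw [pow_succ, Module.End.mul_apply, ← ih, AlgHom.toLinearMap_apply, bind₁_bind₁]
    rfl

theorem toLinearMap_bind₁_mul_eq_one {F G : Fin n → MvPolynomial (Fin n) K}
    (hGF : ∀ i, bind₁ G (F i) = X i) : (bind₁ G).toLinearMap * (bind₁ F).toLinearMap = 1 := by
  ext p
  simp [bind₁_bind₁, hGF]

end Polynomial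

theorem stmt7_general {K : Type*} [Field K] {n : ℕ}
    (F G : Fin n → MvPolynomial (Fin n) K)
    (hGF : ∀ i, bind₁ G (F i) = X i)
    (m : ℕ) (hm : ∀ i, seqP F m i = 0) :
    (∀ k, 1 ≤ k → ∀ i,
      seqP G k i = ∑ l ∈ Finset.Ico k m, (-1 : K) ^ l • bind₁ (compN G (k - 1)) (seqP F l i)) ∧
    ∀ i, seqP G m i = 0 := by
  have h := toLinearMap_bind₁_mul_eq_one hGF
  have hP : ∀ i, ((bind₁ F).toLinearMap - 1) ^ m • X i = 0 := fun i => by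
    rw [Module.End.smul_def, ← seqP_eq_pow_apply, hm i]
  refine ⟨fun k hk i => ?_, fun i => ?_⟩
  · obtain ⟨k, rfl⟩ := Nat.exists_eq_add_of_le' hk
    rw [seqP_eq_pow_apply, ← Module.End.smul_def, sub_one_pow_succ_smul_of_mul_eq_one h (hP i)]
    simp [seqP_eq_pow_apply, bind₁_compN_eq_pow_apply, Module.End.neg_one_pow_apply]
  · rw [seqP_eq_pow_apply, ← Module.End.smul_def]
    exact sub_one_pow_smul_eq_zero_of_mul_eq_one h (hP i)

/-- If `F` is a nice polynomial automorphism with inverse `G`, then `G` is nice: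
if `P_m^i = 0` then `Q_k^i(Y) = ∑_{l=k}^{m-1} (-1)^l P_l^i(G^{k-1}(Y))` for
`k ≥ 1`, and in particular `Q_m^i = 0`. -/
theorem stmt7 {K : Type*} [Field K] [CharZero K] {n : ℕ}
    (F G : Fin n → MvPolynomial (Fin n) K)
    (hFG : ∀ i, bind₁ F (G i) = X i)
    (hGF : ∀ i, bind₁ G (F i) = X i)
    (m : ℕ) (hm : ∀ i, seqP F m i = 0) :
    (∀ k, 1 ≤ k → ∀ i,
      seqP G k i = ∑ l ∈ Finset.Ico k m, (-1 : K) ^ l • bind₁ (compN G (k - 1)) (seqP F l i)) ∧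
    ∀ i, seqP G m i = 0 :=
  stmt7_general F G hGF m hm
end

section
/- The polynomial automorphisms F_1(X_1,X_2) = (X_1 + X_2^3, X_2) and F_2(X_1,X_2) = (X_1, X_2 + X_1^2) of K^2 are both nice, but their composition F = F_1 ∘ F_2 = (X_1 + (X_1^2 + X_2)^3, X_2 + X_1^2) is not nice: P_k^1 ≠ 0 for all k. Hence the set of nice polynomial automorphisms is not closed under composition. -/
open MvPolynomial Finset

/-!
Evaluating `P_k^i` at a point `x` gives the `k`-th forward difference at `0` of the sequence
`j ↦ (Fʲ x)_i`, since `P_{k+1}^i = P_k^i ∘ F - P_k^i`. For the composite map the orbit of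
`x = (2, 0)` stays in `ℕ²` and its first coordinate satisfies `a (j + 1) ≥ a j ^ 2`; such a
sequence grows so fast that all its iterated forward differences are positive, so no `P_k^1`
vanishes at `(2, 0)`. For the two factors, `P_2 = 0` by direct computation.
-/

open fwdDiff

section FwdDiff

variable {M G G' : Type*} [AddCommMonoid M] [AddCommGroup G] [AddCommGroup G']

theorem fwdDiff_iter_map {F : Type*} [FunLike F G G'] [AddMonoidHomClass F G G'] (φ : F)
    (h : M) (u : M → G) (n : ℕ) (y : M) :
    Δ_[h] ^[n] (fun r ↦ φ (u r)) y = φ (Δ_[h] ^[n] u y) := by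
  induction n generalizing u with
  | zero => rfl
  | succ n ih =>
    have hΔ : Δ_[h] (fun r ↦ φ (u r)) = fun r ↦ φ (Δ_[h] u r) := by
      funext r; simp only [fwdDiff, map_sub]
    rw [Function.iterate_succ_apply, Function.iterate_succ_apply, hΔ, ih]

theorem fwdDiff_iter_succ_apply (h : M) (u : M → G) (n : ℕ) (y : M) :
    Δ_[h] ^[n + 1] u y = Δ_[h] ^[n] (fun r ↦ u (r + h)) y - Δ_[h] ^[n] u y := by
  rw [Function.iterate_succ_apply', fwdDiff, fwdDiff_iter_comp_add]

end FwdDiff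

theorem fwdDiff_iter_pos_of_sq_le_succ {a : ℕ → ℤ} (h0 : 2 ≤ a 0)
    (hsq : ∀ j, a j ^ 2 ≤ a (j + 1)) (k j : ℕ) : 0 < Δ_[1] ^[k] a j := by
  have hlin : ∀ j : ℕ, (j : ℤ) + 2 ≤ a j := by
    intro j
    induction j with
    | zero => simpa using h0
    | succ j ih => push_cast; nlinarith [hsq j]
  -- Invariant: `Δᵏ a` grows by a factor at least `a (j + k) - k ≥ 2`, so its differences stay
  -- positive and grow by a factor at least `a (j + k + 1) - (k + 1)`.
  suffices h : ∀ k j, 0 < Δ_[1] ^[k] a j ∧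
      (a (j + k) - k) * Δ_[1] ^[k] a j ≤ Δ_[1] ^[k] a (j + 1) from (h k j).1
  intro k
  induction k with
  | zero =>
    intro j
    have := hlin j
    simp only [Function.iterate_zero, id, Nat.cast_zero, sub_zero, add_zero]
    exact ⟨by linarith, by nlinarith [hsq j]⟩
  | succ k ih =>
    intro j
    obtain ⟨hpos, hrat⟩ := ih j
    obtain ⟨hpos1, hrat1⟩ := ih (j + 1)
    have hge (i : ℕ) : (k : ℤ) + 2 ≤ a (i + k) := by
      have := hlin (i + k); push_cast at this; linarith
    have := hge j
    have := hge (j + 1)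
    simp only [Function.iterate_succ_apply', fwdDiff, Nat.cast_add, Nat.cast_one]
    rw [show j + (k + 1) = j + 1 + k by omega]
    constructor <;> nlinarith

noncomputable def polyEval {R : Type*} [CommSemiring R] {n : ℕ}
    (F : Fin n → MvPolynomial (Fin n) R) (x : Fin n → R) : Fin n → R :=
  fun i ↦ eval x (F i)

theorem eval_seqP {K : Type*} [Field K] {n : ℕ} (F : Fin n → MvPolynomial (Fin n) K)
    (k : ℕ) (x : Fin n → K) (i : Fin n) :
    eval x (seqP F k i) = Δ_[1] ^[k] (fun j : ℕ ↦ (polyEval F)^[j] x i) 0 := by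
  induction k generalizing x with
  | zero => simp [seqP]
  | succ k ih =>
    have hshift : (fun j : ℕ ↦ (polyEval F)^[j + 1] x i) =
        fun j ↦ (polyEval F)^[j] (polyEval F x) i := by
      funext j; rw [Function.iterate_succ_apply]
    rw [fwdDiff_iter_succ_apply, hshift, ← ih, ← ih]
    simp only [seqP, map_sub]
    exact congrArg (· - eval x (seqP F k i)) (eval₂Hom_bind₁ (RingHom.id K) x F _)

def compStep (p : ℕ × ℕ) : ℕ × ℕ := (p.1 + (p.1 ^ 2 + p.2) ^ 3, p.2 + p.1 ^ 2)

theorem sq_le_compStep_fst (p : ℕ × ℕ) : p.1 ^ 2 ≤ (compStep p).1 :=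
  calc p.1 ^ 2 ≤ p.1 ^ 2 + p.2 := Nat.le_add_right _ _
    _ ≤ (p.1 ^ 2 + p.2) ^ 3 := Nat.le_self_pow (by norm_num) _
    _ ≤ (compStep p).1 := Nat.le_add_left _ _

section Composite

variable {K : Type*} [Field K]

local notation "Fcomp" =>
  (![X 0 + (X 0 ^ 2 + X 1) ^ 3, X 1 + X 0 ^ 2] : Fin 2 → MvPolynomial (Fin 2) K)

theorem polyEval_iterate_natCast (p : ℕ × ℕ) (j : ℕ) :
    (polyEval Fcomp)^[j] ![(p.1 : K), p.2] =
      ![((compStep^[j] p).1 : K), (compStep^[j] p).2] := by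
  refine (Function.Semiconj.iterate_right (f := fun p : ℕ × ℕ ↦ ![(p.1 : K), p.2])
    (fun p ↦ ?_) j p).symm
  funext i
  fin_cases i <;> simp [polyEval, compStep]

theorem eval_seqP_comp (k : ℕ) :
    eval ![(2 : K), 0] (seqP Fcomp k 0) =
      ((Δ_[1] ^[k] (fun j ↦ ((compStep^[j] (2, 0)).1 : ℤ)) 0 : ℤ) : K) := by
  rw [eval_seqP]
  refine (congrArg (fun u ↦ Δ_[1] ^[k] u 0) (funext fun j ↦ ?_)).trans
    (fwdDiff_iter_map (Int.castAddHom K) 1 _ k 0)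
  simpa using congrFun (polyEval_iterate_natCast (K := K) (2, 0) j) 0

theorem seqP_comp_ne_zero [CharZero K] (k : ℕ) : seqP Fcomp k 0 ≠ 0 := by
  intro h
  have hpos : 0 < Δ_[1] ^[k] (fun j ↦ ((compStep^[j] (2, 0)).1 : ℤ)) 0 := by
    refine fwdDiff_iter_pos_of_sq_le_succ (by simp) (fun j ↦ ?_) k 0
    rw [Function.iterate_succ_apply']
    exact_mod_cast sq_le_compStep_fst _
  have := eval_seqP_comp (K := K) k
  rw [h, map_zero, eq_comm, Int.cast_eq_zero] at this
  exact hpos.ne' this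

end Composite

/-- `F₁ = (X₁ + X₂³, X₂)` and `F₂ = (X₁, X₂ + X₁²)` are nice, but their
composition `F = F₁ ∘ F₂ = (X₁ + (X₁² + X₂)³, X₂ + X₁²)` is not nice:
`P_k^1 ≠ 0` for all `k`. Hence nice automorphisms are not closed under
composition. -/
theorem stmt9 {K : Type*} [Field K] [CharZero K] :
    (∃ m, ∀ i, seqP (![X 0 + X 1 ^ 3, X 1] : Fin 2 → MvPolynomial (Fin 2) K) m i = 0) ∧
    (∃ m, ∀ i, seqP (![X 0, X 1 + X 0 ^ 2] : Fin 2 → MvPolynomial (Fin 2) K) m i = 0) ∧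
    (polyComp (![X 0 + X 1 ^ 3, X 1] : Fin 2 → MvPolynomial (Fin 2) K)
        ![X 0, X 1 + X 0 ^ 2] =
      ![X 0 + (X 0 ^ 2 + X 1) ^ 3, X 1 + X 0 ^ 2]) ∧
    (∀ k, seqP (![X 0 + (X 0 ^ 2 + X 1) ^ 3, X 1 + X 0 ^ 2] :
        Fin 2 → MvPolynomial (Fin 2) K) k 0 ≠ 0) ∧
    ¬ ∃ m, ∀ i, seqP (![X 0 + (X 0 ^ 2 + X 1) ^ 3, X 1 + X 0 ^ 2] :
        Fin 2 → MvPolynomial (Fin 2) K) m i = 0 := by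
  refine ⟨⟨2, ?_⟩, ⟨2, ?_⟩, ?_, seqP_comp_ne_zero,
    fun ⟨m, hm⟩ ↦ seqP_comp_ne_zero m (hm 0)⟩
  · simp [Fin.forall_fin_two, seqP]
  · simp [Fin.forall_fin_two, seqP]
  · funext i
    fin_cases i
    · simp [polyComp]; ring
    · simp [polyComp]
end

section
/- Let H: K^n → K^n be homogeneous with each H_i a polynomial, and suppose the Jacobian matrix JH satisfies (JH)·H = 0, i.e. Σ_j (∂H_i/∂X_j) H_j = 0 for all i. Then for all k ≥ 1 and all i, Σ_{j_1,...,j_k} (∂^k H_i / ∂X_{j_1}···∂X_{j_k}) H_{j_1}···H_{j_k} = 0. -/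
/-!
Write `D = ∑ₗ Hₗ ∂ₗ` for the derivation along `H`, so that the hypothesis `(JH)·H = 0` says
`D Hᵢ = 0`. Since `D` is a derivation, it then kills every product of the `Hᵢ`, and applying `D`
to `∑_{j₁…jₖ} ∂_{jₖ}⋯∂_{j₁}P · H_{j₁}⋯H_{jₖ}` gives the same sum with `k + 1` in place of `k`.
Hence that sum equals `Dᵏ P`, which for `P = Hᵢ` and `k ≥ 1` is `Dᵏ⁻¹ 0 = 0`.
-/

open MvPolynomial Finset

namespace MvPolynomial

variable {R σ : Type*} [CommSemiring R]

theorem foldl_pderiv_ofFn_snoc (P : MvPolynomial σ R) {k : ℕ} (j : Fin k → σ) (l : σ) :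
    (List.ofFn (Fin.snoc j l : Fin (k + 1) → σ)).foldl (fun p a => pderiv a p) P
      = pderiv l ((List.ofFn j).foldl (fun p a => pderiv a p) P) := by
  rw [List.ofFn_succ']
  simp

variable [Fintype σ]

noncomputable def derivationAlong (H : σ → MvPolynomial σ R) :
    Derivation R (MvPolynomial σ R) (MvPolynomial σ R) :=
  ∑ l, H l • pderiv l

theorem derivationAlong_apply (H : σ → MvPolynomial σ R) (P : MvPolynomial σ R) :
    derivationAlong H P = ∑ l, pderiv l P * H l := by
  change Derivation.coeFnAddMonoidHom (∑ l, H l • pderiv l) P = _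
  simp [map_sum, Derivation.coeFnAddMonoidHom_apply, mul_comm]

theorem derivationAlong_prod_eq_zero {H : σ → MvPolynomial σ R}
    (hH : ∀ i, derivationAlong H (H i) = 0) {k : ℕ} (j : Fin k → σ) :
    derivationAlong H (∏ t, H (j t)) = 0 :=
  Finset.prod_induction _ (fun P => derivationAlong H P = 0)
    (fun P Q hP hQ => by rw [Derivation.leibniz, hP, hQ, smul_zero, smul_zero, add_zero])
    (Derivation.map_one_eq_zero _) fun t _ => hH (j t)

/-- `∑_{j₁,…,jₖ} ∂_{jₖ}⋯∂_{j₁}P · H_{j₁}⋯H_{jₖ}`, i.e. `dᵏP(H, …, H)`. -/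
noncomputable def contractIteratedPderiv (H : σ → MvPolynomial σ R) (k : ℕ)
    (P : MvPolynomial σ R) : MvPolynomial σ R :=
  ∑ j : Fin k → σ, (List.ofFn j).foldl (fun p a => pderiv a p) P * ∏ t, H (j t)

theorem contractIteratedPderiv_succ {H : σ → MvPolynomial σ R}
    (hH : ∀ i, derivationAlong H (H i) = 0) (k : ℕ) (P : MvPolynomial σ R) :
    contractIteratedPderiv H (k + 1) P = derivationAlong H (contractIteratedPderiv H k P) := by
  have hterm : ∀ j : Fin k → σ,
      derivationAlong H ((List.ofFn j).foldl (fun p a => pderiv a p) P * ∏ t, H (j t))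
        = ∑ l, pderiv l ((List.ofFn j).foldl (fun p a => pderiv a p) P)
            * ∏ t, H ((Fin.snoc j l : Fin (k + 1) → σ) t) := by
    intro j
    rw [Derivation.leibniz, derivationAlong_prod_eq_zero hH, smul_zero, zero_add,
      derivationAlong_apply, smul_eq_mul, Finset.mul_sum]
    refine Finset.sum_congr rfl fun l _ => ?_
    rw [Fin.prod_univ_castSucc]
    simp only [Fin.snoc_castSucc, Fin.snoc_last]
    ring
  rw [contractIteratedPderiv, contractIteratedPderiv, map_sum,
    Finset.sum_congr rfl fun j _ => hterm j, ← (Fin.snocEquiv fun _ => σ).sum_comp,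
    Fintype.sum_prod_type, Finset.sum_comm]
  refine Finset.sum_congr rfl fun j _ => Finset.sum_congr rfl fun l _ => ?_
  exact congrArg (· * _) (foldl_pderiv_ofFn_snoc P j l)

theorem contractIteratedPderiv_eq_iterate {H : σ → MvPolynomial σ R}
    (hH : ∀ i, derivationAlong H (H i) = 0) (k : ℕ) (P : MvPolynomial σ R) :
    contractIteratedPderiv H k P = (derivationAlong H)^[k] P := by
  induction k with
  | zero => simp [contractIteratedPderiv]
  | succ k ih => rw [contractIteratedPderiv_succ hH, ih, Function.iterate_succ_apply']

end MvPolynomial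

theorem stmt13_general {K : Type*} [Field K] {n : ℕ}
    (H : Fin n → MvPolynomial (Fin n) K)
    (hJH : ∀ i, ∑ j, pderiv j (H i) * H j = 0) :
    ∀ k, 1 ≤ k → ∀ i,
      ∑ j : Fin k → Fin n,
        (List.ofFn j).foldl (fun p a => pderiv a p) (H i) * ∏ t, H (j t) = 0 := by
  have hH : ∀ i, derivationAlong H (H i) = 0 := fun i =>
    (derivationAlong_apply H (H i)).trans (hJH i)
  intro k hk i
  obtain ⟨m, rfl⟩ := Nat.exists_eq_add_of_le' hk
  rw [← contractIteratedPderiv, contractIteratedPderiv_eq_iterate hH,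
    Function.iterate_succ_apply, hH, iterate_map_zero]

/-- If `H = (H_1,…,H_n)` is homogeneous and `∑_j (∂H_i/∂X_j)·H_j = 0` for all
`i`, then for all `k ≥ 1` and all `i`,
`∑_{j_1,…,j_k} (∂^k H_i/∂X_{j_1}…∂X_{j_k})·H_{j_1}…H_{j_k} = 0`. -/
theorem stmt13 {K : Type*} [Field K] [CharZero K] {n : ℕ}
    (H : Fin n → MvPolynomial (Fin n) K) (d : ℕ)
    (hhom : ∀ i, (H i).IsHomogeneous d)
    (hJH : ∀ i, ∑ j, pderiv j (H i) * H j = 0) :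
    ∀ k, 1 ≤ k → ∀ i,
      ∑ j : Fin k → Fin n,
        (List.ofFn j).foldl (fun p a => pderiv a p) (H i) * ∏ t, H (j t) = 0 :=
  stmt13_general H hJH
end

section
/- Let F = Id + H: K^n → K^n where H_i = L_i^3 with L_i = Σ_j a_{ij} X_j linear forms. If (JH)^2 = 0 then F is nice (P_2^i = 0 for all i) and F^{-1} = X - H. -/
/-! Euler's identity gives `JH · X = 3H`, so `(JH)² = 0` forces `JH · H = 0`, whose `i`-th entry is
`3 Lᵢ² · (aH)ᵢ`. Hence `(aH)ᵢ = 0` for every `i` (when `Lᵢ = 0` the row `aᵢ` itself vanishes).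
Therefore `Lᵢ(X ± H) = Lᵢ ± (aH)ᵢ = Lᵢ`: both `X + H` and `X - H` fix every `Hᵢ = Lᵢ³`, and all
three claims follow. -/

open MvPolynomial Finset

open Matrix

namespace MvPolynomial

variable {σ R : Type*} [Fintype σ] [CommRing R]

noncomputable def jacobian (H : σ → MvPolynomial σ R) : Matrix σ σ (MvPolynomial σ R) :=
  Matrix.of fun i j => pderiv j (H i)

theorem jacobian_mulVec_X {H : σ → MvPolynomial σ R} {d : ℕ}
    (hH : ∀ i, (H i).IsHomogeneous d) : jacobian H *ᵥ X = d • H := by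
  ext1 i
  simpa [jacobian, Matrix.mulVec, dotProduct, mul_comm] using (hH i).sum_X_mul_pderiv

theorem jacobian_mulVec_self_eq_zero [IsDomain R] [CharZero R] {H : σ → MvPolynomial σ R}
    {d : ℕ} (hH : ∀ i, (H i).IsHomogeneous d) (hd : d ≠ 0)
    (hJ : jacobian H * jacobian H = 0) : jacobian H *ᵥ H = 0 := by
  have h : d • (jacobian H *ᵥ H) = 0 := by
    rw [← Matrix.mulVec_smul, ← jacobian_mulVec_X hH, Matrix.mulVec_mulVec, hJ,
      Matrix.zero_mulVec]
  exact (smul_eq_zero.mp h).resolve_left hd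

theorem pderiv_sum_C_mul_X (v : σ → R) (j : σ) :
    pderiv j (∑ k, C (v k) * X k) = C (v j) := by
  classical
  simp [pderiv_X, Pi.single_apply]

theorem bind₁_X_add_sum_C_mul_X (D : σ → MvPolynomial σ R) (v : σ → R) :
    bind₁ (X + D) (∑ k, C (v k) * X k) = ∑ k, C (v k) * X k + ∑ k, C (v k) * D k := by
  simp [mul_add, sum_add_distrib]

theorem isHomogeneous_sum_C_mul_X (v : σ → R) : (∑ k, C (v k) * X k).IsHomogeneous 1 :=
  IsHomogeneous.sum _ _ _ fun k _ => isHomogeneous_C_mul_X (v k) k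

noncomputable def cubeLinear (a : Matrix σ σ R) : σ → MvPolynomial σ R :=
  fun i => (∑ j, C (a i j) * X j) ^ 3

theorem jacobian_cubeLinear_mulVec (a : Matrix σ σ R) (G : σ → MvPolynomial σ R) (i : σ) :
    (jacobian (cubeLinear a) *ᵥ G) i = 3 * (∑ j, C (a i j) * X j) ^ 2 * (a.map C *ᵥ G) i := by
  simp only [jacobian, cubeLinear, mulVec, dotProduct, of_apply, map_apply, pderiv_pow,
    pderiv_sum_C_mul_X, mul_sum]
  refine sum_congr rfl fun j _ => ?_
  push_cast
  ring

theorem map_C_mulVec_cubeLinear_eq_zero [IsDomain R] [CharZero R] (a : Matrix σ σ R)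
    (hJ : jacobian (cubeLinear a) * jacobian (cubeLinear a) = 0) :
    a.map C *ᵥ cubeLinear a = 0 := by
  ext1 i
  have hH : ∀ i, (cubeLinear a i).IsHomogeneous 3 := fun i =>
    by simpa [cubeLinear] using (isHomogeneous_sum_C_mul_X (a i)).pow 3
  have h := congrFun (jacobian_mulVec_self_eq_zero hH three_ne_zero hJ) i
  rw [jacobian_cubeLinear_mulVec] at h
  rcases mul_eq_zero.mp h with hL | hA
  · have hL : ∑ j, C (a i j) * X j = 0 := by simpa using hL
    have hsubst := bind₁_X_add_sum_C_mul_X (cubeLinear a) (a i)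
    rw [hL, map_zero, zero_add] at hsubst
    exact hsubst.symm
  · exact hA

theorem bind₁_X_add_cubeLinear {a : Matrix σ σ R} {D : σ → MvPolynomial σ R}
    (hD : a.map C *ᵥ D = 0) (i : σ) : bind₁ (X + D) (cubeLinear a i) = cubeLinear a i := by
  have h := bind₁_X_add_sum_C_mul_X D (a i)
  rw [show ∑ k, C (a i k) * D k = (a.map C *ᵥ D) i from rfl, hD, Pi.zero_apply, add_zero] at h
  rw [cubeLinear, map_pow, h]

end MvPolynomial

/-- Let `F = Id + H` with `H_i = L_i³`, `L_i = ∑_j a_{ij}X_j`. If `(JH)² = 0`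
then `F` is nice (`P_2^i = 0` for all `i`) and `F⁻¹ = X - H`. -/
theorem stmt14 {K : Type*} [Field K] [CharZero K] {n : ℕ}
    (a : Matrix (Fin n) (Fin n) K)
    (L : Fin n → MvPolynomial (Fin n) K)
    (hL : ∀ i, L i = ∑ j, C (a i j) * X j)
    (H F : Fin n → MvPolynomial (Fin n) K)
    (hH : ∀ i, H i = L i ^ 3)
    (hF : ∀ i, F i = X i + H i)
    (hJ : (Matrix.of fun i j => pderiv j (H i)) *
          (Matrix.of fun i j => pderiv j (H i)) = 0) :
    (∀ i, seqP F 2 i = 0) ∧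
    (∀ i, bind₁ F (X i - H i) = X i) ∧
    (∀ i, bind₁ (fun j => X j - H j) (F i) = X i) := by
  obtain rfl : H = cubeLinear a := funext fun i => by rw [hH, hL, cubeLinear]
  obtain rfl : F = X + cubeLinear a := funext hF
  have hA : a.map C *ᵥ cubeLinear a = 0 := map_C_mulVec_cubeLinear_eq_zero a hJ
  have hFH := bind₁_X_add_cubeLinear hA
  have hGH := bind₁_X_add_cubeLinear (D := -cubeLinear a) (by rw [mulVec_neg, hA, neg_zero])
  refine ⟨fun i => ?_, fun i => ?_, fun i => ?_⟩
  · simp only [seqP, bind₁_X_right, Pi.add_apply, add_sub_cancel_left, hFH, sub_self]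
  · rw [map_sub, bind₁_X_right, hFH, Pi.add_apply, add_sub_cancel_right]
  · have hG : (fun j => X j - cubeLinear a j) = X + -cubeLinear a :=
      funext fun j => sub_eq_add_neg _ _
    rw [hG, Pi.add_apply, map_add, bind₁_X_right, hGH, Pi.add_apply, Pi.neg_apply,
      neg_add_cancel_right]
end

section
/- Let F = Id + H: K^n → K^n where H_i = L_i^3 with L_i = Σ_j a_{ij}X_j. If (JH)^3 = 0, then F is nice with P_5^i = 0 for all i, and the inverse F^{-1} has degree at most 9. Explicitly, P_4^i = 6 Σ_{j,k,l} a_{ij}a_{ik}a_{il} L_j^3 L_k^3 L_l^3 and P_5^i = 0. -/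
/-!
Write `L = A X`, `H = L³` and `M = A H`, so that `L ∘ F = L + M`. The Jacobian is
`JH = 3 diag(L²) A`, hence `(JH)³ = 27 diag(L²) S` with `S = A diag(L²) A diag(L²) A`; a vanishing
`L_i` forces a zero row of `A`, so `(JH)³ = 0` gives `S = 0`. The derivation `D = ∑ H_m ∂_m` kills
`A` and sends `L` to `M`. Contracting `S`, `D S` and `D² S` with `X` gives in turn `A(L²M) = 0`
(so `D M = 3 A(L²M) = 0`), `A(LM²) = 0` and `A(M³) = 0`, hence `M ∘ F = M`. Then `P_k` is the
`(k-1)`-st finite difference of `t ↦ (L + tM)³`, so `P_4 = 6M³`, `P_5 = 0`, and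
`G = X - (L - M)³ = ∑_{l ≤ 4} (-1)^l P_l` inverts `F`.
-/

open MvPolynomial Finset

open Matrix

section Derivation

variable {K R ι : Type*} [CommRing K] [CommRing R] [Algebra K R] (D : Derivation K R R)

theorem derivation_comp_mul (u v : ι → R) : D ∘ (u * v) = u * D ∘ v + v * D ∘ u :=
  funext fun i => D.leibniz (u i) (v i)

theorem derivation_comp_pow (u : ι → R) (k : ℕ) : D ∘ (u ^ k) = k • (u ^ (k - 1) * D ∘ u) :=
  funext fun i => by simp [Derivation.leibniz_pow]

namespace Matrix

variable [Fintype ι]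

theorem map_mul_derivation (P Q : Matrix ι ι R) :
    (P * Q).map D = P.map D * Q + P * Q.map D := by
  ext i j
  simp only [map_apply, mul_apply, add_apply, map_sum, Derivation.leibniz, smul_eq_mul,
    ← sum_add_distrib]
  exact sum_congr rfl fun k _ => by ring

theorem derivation_comp_mulVec {A : Matrix ι ι R} (hA : A.map D = 0) (v : ι → R) :
    D ∘ (A *ᵥ v) = A *ᵥ (D ∘ v) := by
  ext i
  have hAi (j : ι) : D (A i j) = 0 := congrFun (congrFun hA i) j
  simp [mulVec, dotProduct, Derivation.leibniz, hAi]

variable [DecidableEq ι]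

def sandwich (A : Matrix ι ι R) (u v : ι → R) : Matrix ι ι R :=
  A * diagonal u * A * diagonal v * A

theorem sandwich_mulVec (A : Matrix ι ι R) (u v x : ι → R) :
    sandwich A u v *ᵥ x = A *ᵥ (u * A *ᵥ (v * A *ᵥ x)) := by
  have hdiag (w y : ι → R) : diagonal w *ᵥ y = w * y := funext (mulVec_diagonal w y)
  simp only [sandwich, ← mulVec_mulVec, hdiag]

theorem sandwich_map_derivation {A : Matrix ι ι R} (hA : A.map D = 0) (u v : ι → R) :
    (sandwich A u v).map D = sandwich A (D ∘ u) v + sandwich A u (D ∘ v) := by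
  simp only [sandwich, map_mul_derivation, hA, diagonal_map (map_zero D), Matrix.mul_zero,
    Matrix.zero_mul, zero_add, add_zero, Matrix.mul_add, Matrix.mul_assoc]
  rfl

end Matrix

end Derivation

-- In the notation of the paper, `linForms a = L` and `linShift a = A H`, so `L ∘ F = L + linShift a`.
noncomputable section

variable {K σ : Type*} [Field K] [Fintype σ] (a : Matrix σ σ K)

def linForms : σ → MvPolynomial σ K := a.map C *ᵥ X

def linShift : σ → MvPolynomial σ K := a.map C *ᵥ linForms a ^ 3

end

theorem map_C_map_derivation {K σ : Type*} [Field K] (a : Matrix σ σ K)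
    (D : Derivation K (MvPolynomial σ K) (MvPolynomial σ K)) : (a.map C).map D = 0 := by
  ext1 i j
  exact derivation_C _ _

section CubicLinear

variable {K σ : Type*} [Field K] [Fintype σ] (a : Matrix σ σ K)

theorem mulVec_linForms_cube : a.map C *ᵥ linForms a ^ 3 = linShift a := rfl

theorem mkDerivation_comp_linForms (f : σ → MvPolynomial σ K) :
    mkDerivation K f ∘ linForms a = a.map C *ᵥ f := by
  rw [linForms, Matrix.derivation_comp_mulVec _ (map_C_map_derivation a _)]
  exact congrArg _ (funext (mkDerivation_X K f))

theorem mkDerivation_comp_linForms_cube :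
    mkDerivation K (linForms a ^ 3) ∘ linForms a = linShift a :=
  mkDerivation_comp_linForms a _

theorem mkDerivation_comp_linForms_sq :
    mkDerivation K (linForms a ^ 3) ∘ (linForms a ^ 2) = 2 • (linForms a * linShift a) := by
  rw [derivation_comp_pow, mkDerivation_comp_linForms_cube, pow_one]

theorem bind₁_comp_mulVec (f v : σ → MvPolynomial σ K) :
    bind₁ f ∘ (a.map C *ᵥ v) = a.map C *ᵥ (bind₁ f ∘ v) := by
  ext1 i
  simp [mulVec, dotProduct]

theorem bind₁_comp_linForms (f : σ → MvPolynomial σ K) :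
    bind₁ f ∘ linForms a = a.map C *ᵥ f := by
  rw [linForms, bind₁_comp_mulVec]
  exact congrArg _ (funext (bind₁_X_right f))

theorem bind₁_comp_linForms_cubic :
    bind₁ (X + linForms a ^ 3) ∘ linForms a = linForms a + linShift a := by
  rw [bind₁_comp_linForms, mulVec_add]
  rfl

theorem totalDegree_mulVec_le {v : σ → MvPolynomial σ K} {d : ℕ}
    (hv : ∀ j, (v j).totalDegree ≤ d) (i : σ) : ((a.map C *ᵥ v) i).totalDegree ≤ d :=
  totalDegree_finsetSum_le fun j _ => by
    show (C (a i j) * v j).totalDegree ≤ d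
    rw [C_mul']
    exact (totalDegree_smul_le _ _).trans (hv j)

theorem totalDegree_linForms_le (i : σ) : (linForms a i).totalDegree ≤ 1 :=
  totalDegree_mulVec_le a (fun j => (totalDegree_X j).le) i

theorem totalDegree_linShift_le (i : σ) : (linShift a i).totalDegree ≤ 3 :=
  totalDegree_mulVec_le a (fun j => (totalDegree_pow _ 3).trans (by
    have := totalDegree_linForms_le a j; omega)) i

theorem totalDegree_X_sub_linForms_sub_linShift_cube_le (i : σ) :
    (X i - (linForms a i - linShift a i) ^ 3).totalDegree ≤ 9 := by
  have hsub : (linForms a i - linShift a i).totalDegree ≤ 3 :=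
    (totalDegree_sub _ _).trans
      (max_le ((totalDegree_linForms_le a i).trans (by norm_num)) (totalDegree_linShift_le a i))
  refine (totalDegree_sub _ _).trans (max_le ?_ ((totalDegree_pow _ 3).trans (by omega)))
  rw [totalDegree_X]
  norm_num

theorem linShift_pow_three (i : σ) : linShift a i ^ 3 =
    ∑ j, ∑ k, ∑ l, C (a i j * a i k * a i l) * linForms a j ^ 3 * linForms a k ^ 3 *
      linForms a l ^ 3 := by
  simp only [linShift, mulVec, dotProduct, pow_three, sum_mul, mul_sum, map_apply, Pi.pow_apply]
  refine sum_congr rfl fun j _ => sum_congr rfl fun k _ => sum_congr rfl fun l _ => ?_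
  simp only [map_mul]
  ring

variable [DecidableEq σ]

theorem coeff_linForms (i j : σ) : coeff (Finsupp.single j 1) (linForms a i) = a i j := by
  simp [linForms, mulVec, dotProduct, coeff_sum, coeff_C_mul, coeff_X, Finsupp.single_left_inj]

theorem jacobian_linForms_cube :
    Matrix.of (fun i j => pderiv j ((linForms a ^ 3) i)) =
      3 • (diagonal (linForms a ^ 2) * a.map C) := by
  ext i j
  have : pderiv j (linForms a i) = C (a i j) := by
    simp [linForms, mulVec, dotProduct, pderiv_X, Pi.single_apply]
  simp [Derivation.leibniz_pow, this, diagonal_mul]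

theorem sandwich_mulVec_X (u v : σ → MvPolynomial σ K) :
    sandwich (a.map C) u v *ᵥ X = a.map C *ᵥ (u * a.map C *ᵥ (v * linForms a)) :=
  sandwich_mulVec _ _ _ _

theorem sandwich_linForms_sq_eq_zero [CharZero K]
    (hJ : (Matrix.of fun i j => pderiv j ((linForms a ^ 3) i)) *
          (Matrix.of fun i j => pderiv j ((linForms a ^ 3) i)) *
          (Matrix.of fun i j => pderiv j ((linForms a ^ 3) i)) = 0) :
    sandwich (a.map C) (linForms a ^ 2) (linForms a ^ 2) = 0 := by
  have h27 : 27 • (diagonal (linForms a ^ 2) *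
      sandwich (a.map C) (linForms a ^ 2) (linForms a ^ 2)) = 0 := by
    rw [← hJ, jacobian_linForms_cube]
    simp only [sandwich, Matrix.smul_mul, Matrix.mul_smul, smul_smul, Matrix.mul_assoc]
    norm_num
  refine Matrix.ext fun i l => ?_
  have hil := congrFun (congrFun h27 i) l
  simp only [Matrix.smul_apply, diagonal_mul, Pi.pow_apply, Matrix.zero_apply, nsmul_eq_mul,
    mul_eq_zero, pow_eq_zero_iff two_ne_zero] at hil
  obtain h0 | hL | hS := hil
  · norm_num at h0
  · have hrow (k : σ) : a i k = 0 := by rw [← coeff_linForms a i k, hL, coeff_zero]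
    simp [sandwich, Matrix.mul_assoc, Matrix.mul_apply, hrow]
  · exact hS

variable (hS : sandwich (a.map C) (linForms a ^ 2) (linForms a ^ 2) = 0)
include hS

theorem mulVec_linForms_sq_mul_linShift_eq_zero :
    a.map C *ᵥ (linForms a ^ 2 * linShift a) = 0 := by
  rw [← zero_mulVec X, ← hS, sandwich_mulVec_X, ← pow_succ]
  rfl

theorem mkDerivation_comp_linShift : mkDerivation K (linForms a ^ 3) ∘ linShift a = 0 := by
  rw [linShift, Matrix.derivation_comp_mulVec _ (map_C_map_derivation a _), derivation_comp_pow,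
    mkDerivation_comp_linForms, mulVec_smul]
  exact (congrArg _ (mulVec_linForms_sq_mul_linShift_eq_zero a hS)).trans (smul_zero _)

variable [CharZero K]

theorem mulVec_linForms_mul_linShift_sq_eq_zero :
    a.map C *ᵥ (linForms a * linShift a ^ 2) = 0 := by
  -- `(D S) X = 2 A(L M²) + 2 A(L² ⊙ A(L² M))`
  have hD := congrArg (fun S => S.map (mkDerivation K (linForms a ^ 3)) *ᵥ X) hS
  simp only [sandwich_map_derivation _ (map_C_map_derivation a _), Matrix.map_zero _ (map_zero _),
    zero_mulVec, add_mulVec, sandwich_mulVec_X, mkDerivation_comp_linForms_sq] at hD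
  have hL3 : linForms a ^ 2 * linForms a = linForms a ^ 3 := by ring
  have hL2M : 2 • (linForms a * linShift a) * linForms a = 2 • (linForms a ^ 2 * linShift a) := by
    ring
  have hLM2 : 2 • (linForms a * linShift a) * linShift a = 2 • (linForms a * linShift a ^ 2) := by
    ring
  simp only [hL3, hL2M, hLM2, mulVec_smul, mulVec_linForms_sq_mul_linShift_eq_zero a hS,
    smul_zero, mul_zero, mulVec_zero, add_zero, mulVec_linForms_cube] at hD
  exact (smul_eq_zero.1 hD).resolve_left two_ne_zero

theorem mulVec_linShift_cube_eq_zero : a.map C *ᵥ linShift a ^ 3 = 0 := by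
  set D := mkDerivation K (linForms a ^ 3)
  have hDL : D ∘ linForms a = linShift a := mkDerivation_comp_linForms_cube a
  have hDM : D ∘ linShift a = 0 := mkDerivation_comp_linShift a hS
  have hDL2 : D ∘ (linForms a ^ 2) = 2 • (linForms a * linShift a) :=
    mkDerivation_comp_linForms_sq a
  have hD2L2 : D ∘ (2 • (linForms a * linShift a)) = 2 • linShift a ^ 2 := by
    rw [show D ∘ (2 • (linForms a * linShift a)) = 2 • (D ∘ (linForms a * linShift a)) from
      funext fun i => map_nsmul D 2 _, derivation_comp_mul, hDL, hDM]
    ring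
  -- `(D² S) X = 2 A(M³) + 8 A(L M ⊙ A(L² M)) + 2 A(L² ⊙ A(L M²))`
  have hD := congrArg (fun S => (S.map D).map D *ᵥ X) hS
  simp only [sandwich_map_derivation _ (map_C_map_derivation a D), Matrix.map_zero _ (map_zero D),
    Matrix.map_add _ (map_add D), zero_mulVec, add_mulVec, sandwich_mulVec_X, hDL2, hD2L2] at hD
  have hL3 : linForms a ^ 2 * linForms a = linForms a ^ 3 := by ring
  have hL2M : 2 • (linForms a * linShift a) * linForms a = 2 • (linForms a ^ 2 * linShift a) := by
    ring
  have hLM2 : 2 • linShift a ^ 2 * linForms a = 2 • (linForms a * linShift a ^ 2) := by ring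
  have hM3 : 2 • linShift a ^ 2 * linShift a = 2 • linShift a ^ 3 := by ring
  simp only [hL3, hL2M, hLM2, mulVec_smul, mulVec_linForms_sq_mul_linShift_eq_zero a hS,
    mulVec_linForms_mul_linShift_sq_eq_zero a hS, smul_zero, mul_zero, mulVec_zero, add_zero,
    mulVec_linForms_cube, hM3] at hD
  exact (smul_eq_zero.1 hD).resolve_left two_ne_zero

theorem bind₁_comp_linShift : bind₁ (X + linForms a ^ 3) ∘ linShift a = linShift a := by
  have hcube : (linForms a + linShift a) ^ 3 = linForms a ^ 3 + 3 • (linForms a ^ 2 * linShift a)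
      + 3 • (linForms a * linShift a ^ 2) + linShift a ^ 3 := by ring
  conv_lhs => rw [linShift]
  rw [bind₁_comp_mulVec, show bind₁ (X + linForms a ^ 3) ∘ (linForms a ^ 3) =
    (bind₁ (X + linForms a ^ 3) ∘ linForms a) ^ 3 from funext fun i => map_pow _ (linForms a i) 3,
    bind₁_comp_linForms_cubic, hcube]
  simp only [mulVec_add, mulVec_smul, mulVec_linForms_sq_mul_linShift_eq_zero a hS,
    mulVec_linForms_mul_linShift_sq_eq_zero a hS, mulVec_linShift_cube_eq_zero a hS, smul_zero,
    mulVec_linForms_cube, add_zero]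

end CubicLinear

section Nilpotency

variable {K : Type*} [Field K] {n : ℕ} {F : Fin n → MvPolynomial (Fin n) K} {i : Fin n}
  {ℓ m : MvPolynomial (Fin n) K}

theorem seqP_succ_s15 (k : ℕ) : seqP F (k + 1) i = bind₁ F (seqP F k i) - seqP F k i := rfl

variable (hF : F i = X i + ℓ ^ 3) (hℓ : bind₁ F ℓ = ℓ + m) (hm : bind₁ F m = m)
include hF hℓ hm

theorem seqP_four_of_shift : seqP F 4 i = 6 * m ^ 3 := by
  have h1 : seqP F 1 i = ℓ ^ 3 := by
    rw [seqP_succ_s15, seqP, bind₁_X_right, hF]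
    ring
  have h2 : seqP F 2 i = 3 * ℓ ^ 2 * m + 3 * ℓ * m ^ 2 + m ^ 3 := by
    rw [seqP_succ_s15, h1, map_pow, hℓ]
    ring
  have h3 : seqP F 3 i = 6 * ℓ * m ^ 2 + 6 * m ^ 3 := by
    rw [seqP_succ_s15, h2]
    simp only [map_add, map_mul, map_pow, map_ofNat, hℓ, hm]
    ring
  rw [seqP_succ_s15, h3]
  simp only [map_add, map_mul, map_pow, map_ofNat, hℓ, hm]
  ring

theorem seqP_five_of_shift : seqP F 5 i = 0 := by
  rw [seqP_succ_s15, seqP_four_of_shift hF hℓ hm]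
  simp only [map_mul, map_pow, map_ofNat, hm, sub_self]

theorem bind₁_X_sub_cube_of_shift : bind₁ F (X i - (ℓ - m) ^ 3) = X i := by
  rw [map_sub, map_pow, map_sub, bind₁_X_right, hF, hℓ, hm]
  ring

end Nilpotency

/-- Let `F = Id + H` with `H_i = L_i³`, `L_i = ∑_j a_{ij}X_j`. If `(JH)³ = 0`
then `F` is nice with `P_5^i = 0` for all `i`,
`P_4^i = 6·∑_{j,k,l} a_{ij}a_{ik}a_{il} L_j³L_k³L_l³`, and `F⁻¹` has degree at
most 9. -/
theorem stmt15 {K : Type*} [Field K] [CharZero K] {n : ℕ}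
    (a : Matrix (Fin n) (Fin n) K)
    (L : Fin n → MvPolynomial (Fin n) K)
    (hL : ∀ i, L i = ∑ j, C (a i j) * X j)
    (H F : Fin n → MvPolynomial (Fin n) K)
    (hH : ∀ i, H i = L i ^ 3)
    (hF : ∀ i, F i = X i + H i)
    (hJ : (Matrix.of fun i j => pderiv j (H i)) *
          (Matrix.of fun i j => pderiv j (H i)) *
          (Matrix.of fun i j => pderiv j (H i)) = 0) :
    (∀ i, seqP F 5 i = 0) ∧
    (∀ i, seqP F 4 i =
      6 * ∑ j, ∑ k, ∑ l, C (a i j * a i k * a i l) * L j ^ 3 * L k ^ 3 * L l ^ 3) ∧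
    (∃ G : Fin n → MvPolynomial (Fin n) K,
      (∀ i, bind₁ F (G i) = X i) ∧ ∀ i, (G i).totalDegree ≤ 9) := by
  obtain rfl : L = linForms a := funext hL
  obtain rfl : H = linForms a ^ 3 := funext hH
  obtain rfl : F = X + linForms a ^ 3 := funext hF
  have hS := sandwich_linForms_sq_eq_zero a hJ
  have hℓ i := congrFun (bind₁_comp_linForms_cubic a) i
  have hm i := congrFun (bind₁_comp_linShift a hS) i
  refine ⟨fun i => seqP_five_of_shift rfl (hℓ i) (hm i), fun i => ?_,
    fun i => X i - (linForms a i - linShift a i) ^ 3,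
    fun i => bind₁_X_sub_cube_of_shift rfl (hℓ i) (hm i),
    totalDegree_X_sub_linForms_sub_linShift_cube_le a⟩
  rw [seqP_four_of_shift rfl (hℓ i) (hm i), linShift_pow_three]
end

section
/- The polynomial automorphism f of K^4 given by f_1 = x_1 + p x_4, f_2 = x_2 - p x_3, f_3 = x_3 + x_4^3, f_4 = x_4, where p = x_1x_3 + x_2x_4, is not nice: for every m there exists i with p_m^i ≠ 0. -/
/-!
If `x_j = f^[j] x` is an orbit of `f`, evaluating `p_k^i` at `x_j` gives the `k`-th forward
difference of the coordinate sequence `j ↦ (x_j)_i`, so niceness forces every coordinate along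
every orbit to have vanishing forward differences of some fixed order. On the orbit of
`(0, 1, 0, 1)` we have `x₄ = 1`, `x₃ = j`, and `(x₁, p) ↦ (x₁ + p, x₁ + 2p)`, so `x₁ = F_{2j}`.
The forward differences of `j ↦ F_{2j}` are again Fibonacci numbers, `Δ^k F_{2j} = F_{2j+k}`,
which are nonzero for `j ≥ 1`.
-/

open MvPolynomial Finset

open scoped fwdDiff

section Orbit

variable {K : Type*} [Field K] {n : ℕ}

noncomputable def polyMap (F : Fin n → MvPolynomial (Fin n) K) (x : Fin n → K) : Fin n → K :=
  fun i => aeval x (F i)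

theorem aeval_seqP_iterate_polyMap (F : Fin n → MvPolynomial (Fin n) K) (x : Fin n → K)
    (k : ℕ) (i : Fin n) (j : ℕ) :
    aeval ((polyMap F)^[j] x) (seqP F k i) = (Δ_[1])^[k] (fun j ↦ (polyMap F)^[j] x i) j := by
  induction k generalizing j with
  | zero => simp [seqP]
  | succ k ih =>
    rw [Function.iterate_succ_apply', fwdDiff, ← ih, ← ih, seqP, map_sub, aeval_bind₁,
      Function.iterate_succ_apply']
    rfl

end Orbit

theorem fwdDiff_iter_fib_two_mul {R : Type*} [AddCommGroupWithOne R] (k j : ℕ) :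
    (Δ_[1])^[k] (fun j ↦ (Nat.fib (2 * j) : R)) j = Nat.fib (2 * j + k) := by
  induction k generalizing j with
  | zero => rfl
  | succ k ih =>
    rw [Function.iterate_succ_apply', fwdDiff, ih, ih, sub_eq_iff_eq_add,
      show 2 * (j + 1) + k = 2 * j + k + 2 by ring, Nat.fib_add_two, Nat.cast_add, add_comm]
    rfl

section Example

variable (K : Type*) [Field K]

noncomputable def nonNiceMap : Fin 4 → MvPolynomial (Fin 4) K :=
  ![X 0 + (X 0 * X 2 + X 1 * X 3) * X 3,
    X 1 - (X 0 * X 2 + X 1 * X 3) * X 2,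
    X 2 + X 3 ^ 3,
    X 3]

/-- In the coordinates `a = x₁`, `b = p = x₁x₃ + x₂x₄`, the orbit is `(a, b) = (F_{2j}, F_{2j+1})`. -/
def fibOrbit (j : ℕ) : Fin 4 → K :=
  ![Nat.fib (2 * j), Nat.fib (2 * j + 1) - j * Nat.fib (2 * j), j, 1]

theorem polyMap_nonNiceMap_fibOrbit (j : ℕ) :
    polyMap (nonNiceMap K) (fibOrbit K j) = fibOrbit K (j + 1) := by
  have fib_even : (Nat.fib (2 * (j + 1)) : K) = Nat.fib (2 * j) + Nat.fib (2 * j + 1) := by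
    rw [show 2 * (j + 1) = 2 * j + 2 by ring, Nat.fib_add_two, Nat.cast_add]
  have fib_odd : (Nat.fib (2 * (j + 1) + 1) : K) = Nat.fib (2 * j) + 2 * Nat.fib (2 * j + 1) := by
    rw [show 2 * (j + 1) + 1 = 2 * j + 1 + 2 by ring, Nat.fib_add_two,
      show 2 * j + 1 + 1 = 2 * j + 2 by ring, Nat.fib_add_two]
    push_cast
    ring
  ext i
  fin_cases i <;>
    simp [polyMap, nonNiceMap, fibOrbit, fib_even, fib_odd] <;> ring

theorem iterate_polyMap_nonNiceMap_fibOrbit_zero (j : ℕ) :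
    (polyMap (nonNiceMap K))^[j] (fibOrbit K 0) = fibOrbit K j := by
  induction j with
  | zero => rfl
  | succ j ih => rw [Function.iterate_succ_apply', ih, polyMap_nonNiceMap_fibOrbit]

theorem aeval_fibOrbit_seqP_nonNiceMap (k j : ℕ) :
    aeval (fibOrbit K j) (seqP (nonNiceMap K) k 0) = Nat.fib (2 * j + k) := by
  rw [← iterate_polyMap_nonNiceMap_fibOrbit_zero, aeval_seqP_iterate_polyMap,
    ← fwdDiff_iter_fib_two_mul]
  simp only [iterate_polyMap_nonNiceMap_fibOrbit_zero]
  rfl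

end Example

/-- The automorphism `f = (x₁ + px₄, x₂ - px₃, x₃ + x₄³, x₄)` of `K⁴`, with
`p = x₁x₃ + x₂x₄`, is not nice: for every `m` there is an `i` with
`p_m^i ≠ 0`. -/
theorem stmt19 {K : Type*} [Field K] [CharZero K] :
    ∀ m : ℕ, ∃ i,
      seqP (![X 0 + (X 0 * X 2 + X 1 * X 3) * X 3,
              X 1 - (X 0 * X 2 + X 1 * X 3) * X 2,
              X 2 + X 3 ^ 3,
              X 3] : Fin 4 → MvPolynomial (Fin 4) K) m i ≠ 0 := by
  intro m
  refine ⟨0, fun h ↦ ?_⟩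
  have eval_fib := aeval_fibOrbit_seqP_nonNiceMap K m 1
  rw [nonNiceMap, h, map_zero, eq_comm, Nat.cast_eq_zero] at eval_fib
  exact (Nat.fib_pos.2 (by omega)).ne' eval_fib
end
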